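/- arXiv:1406.7772 — 2 statements merged into one kernel-verified Lean document; each statement's English description precedes it below -/
import Mathlib

section
/- If a finite connected multigraph Γ' is obtained from a finite connected multigraph Γ by contracting a single edge e, then v₁(Γ') + b₁(Γ') ≤ v₁(Γ) + b₁(Γ), where v₁ denotes the number of vertices of degree 1 and b₁ denotes the first Betti number (number of edges minus number of vertices plus 1). -/
/-- A finite multigraph: finite vertex and edge types, with each edge assigned
its unordered pair of endpoints (loops and multiple edges allowed). -/
structure Multigraph where
  V : Type
  E : Type
  fintypeV : Fintype V
  fintypeE : Fintype E
  ends : E → Sym2 V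

attribute [instance] Multigraph.fintypeV Multigraph.fintypeE

namespace Multigraph

open Classical in
/-- The degree (valence) of a vertex: loops count twice. -/
noncomputable def deg (G : Multigraph) (v : G.V) : ℕ :=
  ∑ e : G.E, (if v ∈ G.ends e then (if G.ends e = s(v, v) then 2 else 1) else 0)

/-- The number of 1-valent vertices. -/
noncomputable def v₁ (G : Multigraph) : ℕ := Nat.card {v : G.V // G.deg v = 1}

/-- The first Betti number `|E| - |V| + 1` (as an integer). -/
noncomputable def b₁ (G : Multigraph) : ℤ :=
  (Nat.card G.E : ℤ) - (Nat.card G.V : ℤ) + 1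

/-- Adjacency through some edge. -/
def Adj (G : Multigraph) (u v : G.V) : Prop := ∃ e : G.E, G.ends e = s(u, v)

/-- Connectedness of a multigraph. -/
def Connected (G : Multigraph) : Prop :=
  Nonempty G.V ∧ ∀ u v : G.V, Relation.ReflTransGen G.Adj u v

/-- Contraction of the edge `e`: the endpoints of `e` get identified and `e`
is removed (for a loop, this just deletes the loop). -/
noncomputable def contract (G : Multigraph) (e : G.E) : Multigraph where
  V := Quot (fun a b => G.ends e = s(a, b))
  E := {e' : G.E // e' ≠ e}
  fintypeV := by
    classical exact Fintype.ofSurjective (Quot.mk _) (fun q => Quot.exists_rep q)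
  fintypeE := by classical exact inferInstance
  ends := fun e' => Sym2.map (Quot.mk _) (G.ends e'.1)

end Multigraph

/-!
Every edge other than `e` survives, and the degree of a vertex class of `G.contract e` is the
total degree of the class in `G` minus what `e` contributes to it. So a vertex off `e` keeps
its degree, and the endpoints `u`, `w` of `e` merge into a vertex of degree
`deg u + deg w - 2`.

If `e` is a loop, `b₁` drops by one and at most one new 1-valent vertex appears (`u`, when it
had degree 3). Otherwise `b₁` is unchanged and a 1-valent merged vertex forces
`deg u + deg w = 3`, so one of `u`, `w` was already 1-valent.
-/

lemma Nat.card_subtype_ne_add_one {α : Type*} [Fintype α] (a : α) :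
    Nat.card {x // x ≠ a} + 1 = Nat.card α := by
  classical
  simp only [Nat.card_eq_fintype_card, Fintype.card_subtype_compl, Fintype.card_subtype_eq]
  have := Fintype.card_pos_iff.mpr ⟨a⟩
  omega

lemma Sym2.eqvGen_eq_mk_iff {α : Type*} (z : Sym2 α) (a b : α) :
    Relation.EqvGen (fun a b => z = s(a, b)) a b ↔ a = b ∨ z = s(a, b) := by
  refine ⟨fun h => ?_, ?_⟩
  · induction h with
    | rel _ _ h => exact .inr h
    | refl => exact .inl rfl
    | symm a b _ ih => rwa [eq_comm, Sym2.eq_swap]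
    | trans a b c _ _ ihab ihbc => rcases ihab with rfl | rfl <;> grind [Sym2.eq_iff]
  · rintro (rfl | h)
    exacts [.refl _, .rel _ _ h]

namespace Multigraph

open Finset

section Incidence

variable {α β : Type*}

open Classical in
noncomputable def incidence (x : α) (z : Sym2 α) : ℕ :=
  if x ∈ z then (if z = s(x, x) then 2 else 1) else 0

lemma incidence_mk [DecidableEq α] (x a b : α) :
    incidence x s(a, b) = (if a = x then 1 else 0) + (if b = x then 1 else 0) := by
  by_cases ha : a = x <;> by_cases hb : b = x <;> subst_vars <;> simp_all [incidence, eq_comm]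

lemma incidence_pos {x : α} {z : Sym2 α} (hx : x ∈ z) : 0 < incidence x z := by
  unfold incidence
  split_ifs <;> omega

lemma incidence_of_notMem {x : α} {z : Sym2 α} (hx : x ∉ z) : incidence x z = 0 := by
  simp [incidence, hx]

lemma incidence_map [Fintype α] [DecidableEq α] [DecidableEq β] (f : α → β) (y : β)
    (z : Sym2 α) : incidence y (z.map f) = ∑ x with f x = y, incidence x z := by
  induction z using Sym2.ind with
  | _ a b => simp [incidence_mk, sum_add_distrib]

end Incidence

variable {G : Multigraph} {e : G.E} {u w x : G.V}

lemma deg_eq_sum_incidence (G : Multigraph) (v : G.V) :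
    G.deg v = ∑ e, incidence v (G.ends e) := rfl

lemma one_le_deg_of_mem (hx : x ∈ G.ends e) : 1 ≤ G.deg x :=
  (incidence_pos hx).trans_le
    (single_le_sum (f := fun e => incidence x (G.ends e)) (by simp) (mem_univ e))

lemma v₁_eq_card (G : Multigraph) : G.v₁ = #{v | G.deg v = 1} := by
  rw [v₁, Nat.card_eq_fintype_card, Fintype.card_subtype]

variable (G e) in
def contractMap : G.V → (G.contract e).V := Quot.mk _

lemma contractMap_surjective : Function.Surjective (G.contractMap e) := Quot.mk_surjective

lemma contractMap_eq_iff {a b : G.V} :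
    G.contractMap e a = G.contractMap e b ↔ a = b ∨ G.ends e = s(a, b) :=
  Quot.eq.trans (Sym2.eqvGen_eq_mk_iff _ a b)

lemma contractMap_eq_of_mem {a b : G.V} (ha : a ∈ G.ends e) (hb : b ∈ G.ends e) :
    G.contractMap e a = G.contractMap e b := by
  induction h : G.ends e using Sym2.ind with
  | _ u w =>
    rw [h, Sym2.mem_iff] at ha hb
    rw [contractMap_eq_iff, h, Sym2.eq_iff]
    grind

lemma card_contract_E_add_one : Nat.card (G.contract e).E + 1 = Nat.card G.E :=
  Nat.card_subtype_ne_add_one e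

lemma card_contract_V_of_loop (he : G.ends e = s(u, u)) :
    Nat.card (G.contract e).V = Nat.card G.V := by
  refine (Nat.card_congr (Equiv.ofBijective _ ⟨fun a b hab => ?_, contractMap_surjective⟩)).symm
  rw [contractMap_eq_iff, he, Sym2.eq_iff] at hab
  grind

lemma card_contract_V_add_one (he : G.ends e = s(u, w)) (huw : u ≠ w) :
    Nat.card (G.contract e).V + 1 = Nat.card G.V := by
  have hbij : Function.Bijective fun x : {x // x ≠ w} => G.contractMap e x := by
    refine ⟨fun a b hab => Subtype.ext ?_, fun y => ?_⟩
    · rw [contractMap_eq_iff, he, Sym2.eq_iff] at hab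
      grind
    · obtain ⟨x, rfl⟩ := contractMap_surjective y
      by_cases hxw : x = w
      · exact ⟨⟨u, huw⟩, contractMap_eq_of_mem (by simp [he]) (by simp [he, hxw])⟩
      · exact ⟨⟨x, hxw⟩, rfl⟩
  rw [← Nat.card_congr (Equiv.ofBijective _ hbij), Nat.card_subtype_ne_add_one]

/- Summing `incidence_map` over all edges of `G`: the image of `e` under `contractMap` is the
one term missing from the degree in `G.contract e`. -/
lemma deg_contract_add_incidence [DecidableEq (G.contract e).V] (x : G.V) :
    (G.contract e).deg (G.contractMap e x) +
        incidence (G.contractMap e x) ((G.ends e).map (G.contractMap e)) =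
      ∑ a with G.contractMap e a = G.contractMap e x, G.deg a := by
  classical
  simp only [deg_eq_sum_incidence]
  rw [sum_comm]
  simp only [← incidence_map]
  rw [Fintype.sum_eq_add_sum_subtype_ne _ e, add_comm]
  rfl

lemma deg_contractMap_of_notMem (hx : x ∉ G.ends e) :
    (G.contract e).deg (G.contractMap e x) = G.deg x := by
  classical
  have hfibre : ∀ a, G.contractMap e a = G.contractMap e x ↔ a = x := fun a => by
    rw [contractMap_eq_iff]
    exact or_iff_left fun h => hx (h ▸ Sym2.mem_mk_right a x)
  have hfibre' : ({a | G.contractMap e a = G.contractMap e x} : Finset G.V) = {x} := by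
    ext a
    simp [hfibre]
  have hloop : G.contractMap e x ∉ (G.ends e).map (G.contractMap e) := by
    rw [Sym2.mem_map]
    rintro ⟨a, ha, hax⟩
    exact hx ((hfibre a).mp hax ▸ ha)
  have := deg_contract_add_incidence (e := e) x
  rwa [incidence_of_notMem hloop, add_zero, hfibre', sum_singleton] at this

lemma deg_contractMap_add_two [DecidableEq G.V] (he : G.ends e = s(u, w)) :
    (G.contract e).deg (G.contractMap e u) + 2 = ∑ a ∈ {u, w}, G.deg a := by
  classical
  have hfibre : ∀ a, G.contractMap e a = G.contractMap e u ↔ a = u ∨ a = w := fun a => by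
    rw [contractMap_eq_iff, he, Sym2.eq_iff]
    grind
  have hloop : (G.ends e).map (G.contractMap e) = s(G.contractMap e u, G.contractMap e u) := by
    rw [he, Sym2.map_mk,
      contractMap_eq_of_mem (e := e) (a := w) (b := u) (by simp [he]) (by simp [he])]
  have := deg_contract_add_incidence (e := e) u
  rw [hloop] at this
  convert this using 2
  · simp [incidence]
  · ext a
    simp [hfibre]

lemma v₁_contract_le_of_loop (he : G.ends e = s(u, u)) : (G.contract e).v₁ ≤ G.v₁ + 1 := by
  classical
  rw [v₁_eq_card, v₁_eq_card]
  calc #{y | (G.contract e).deg y = 1}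
      ≤ #(insert (G.contractMap e u)
          (({x | G.deg x = 1} : Finset G.V).image (G.contractMap e))) :=
        card_le_card fun y hy => ?_
    _ ≤ #{x | G.deg x = 1} + 1 := (card_insert_le _ _).trans (by gcongr; exact card_image_le)
  obtain ⟨x, rfl⟩ := contractMap_surjective y
  simp only [mem_filter, mem_univ, true_and, mem_insert, mem_image] at hy ⊢
  by_cases hx : x ∈ G.ends e
  · exact .inl (contractMap_eq_of_mem hx (by simp [he]))
  · exact .inr ⟨x, (deg_contractMap_of_notMem hx).symm.trans hy, rfl⟩

lemma v₁_contract_le_of_ne (he : G.ends e = s(u, w)) (huw : u ≠ w) :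
    (G.contract e).v₁ ≤ G.v₁ := by
  classical
  rw [v₁_eq_card, v₁_eq_card]
  refine (card_le_card fun y hy => ?_).trans
    (card_image_le (s := {x | G.deg x = 1}) (f := G.contractMap e))
  obtain ⟨x, rfl⟩ := contractMap_surjective y
  simp only [mem_filter, mem_univ, true_and, mem_image] at hy ⊢
  by_cases hx : x ∈ G.ends e
  · have hu : u ∈ G.ends e := by simp [he]
    have hw : w ∈ G.ends e := by simp [he]
    have hsum := deg_contractMap_add_two he
    rw [sum_pair huw, ← contractMap_eq_of_mem hx hu, hy] at hsum
    have := one_le_deg_of_mem hu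
    have := one_le_deg_of_mem hw
    rcases (by omega : G.deg u = 1 ∨ G.deg w = 1) with h | h
    · exact ⟨u, h, contractMap_eq_of_mem hu hx⟩
    · exact ⟨w, h, contractMap_eq_of_mem hw hx⟩
  · exact ⟨x, (deg_contractMap_of_notMem hx).symm.trans hy, rfl⟩

lemma b₁_contract_of_loop (he : G.ends e = s(u, u)) : (G.contract e).b₁ = G.b₁ - 1 := by
  have hE := card_contract_E_add_one (e := e)
  have hV := card_contract_V_of_loop he
  simp only [b₁]
  omega

lemma b₁_contract_of_ne (he : G.ends e = s(u, w)) (huw : u ≠ w) :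
    (G.contract e).b₁ = G.b₁ := by
  have hE := card_contract_E_add_one (e := e)
  have hV := card_contract_V_add_one he huw
  simp only [b₁]
  omega

end Multigraph

theorem v1_add_b1_contract_le_general (G : Multigraph) (e : G.E) :
    ((G.contract e).v₁ : ℤ) + (G.contract e).b₁ ≤ (G.v₁ : ℤ) + G.b₁ := by
  obtain ⟨u, w, he⟩ : ∃ u w, G.ends e = s(u, w) :=
    Sym2.ind (fun u w => ⟨u, w, rfl⟩) (G.ends e)
  rcases eq_or_ne u w with rfl | huw
  · have hv₁ := Multigraph.v₁_contract_le_of_loop he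
    rw [Multigraph.b₁_contract_of_loop he]
    omega
  · have hv₁ := Multigraph.v₁_contract_le_of_ne he huw
    rw [Multigraph.b₁_contract_of_ne he huw]
    omega

/-- Contracting a single edge of a finite connected multigraph does not
increase `v₁ + b₁`. -/
theorem v1_add_b1_contract_le (G : Multigraph) (hG : G.Connected) (e : G.E) :
    ((G.contract e).v₁ : ℤ) + (G.contract e).b₁ ≤ (G.v₁ : ℤ) + G.b₁ :=
  v1_add_b1_contract_le_general G e
end

section
/- Let X⁽ⁱ⁾ = X₁⁽ⁱ⁾ × X₂⁽ⁱ⁾ with ℓᵖ-product metrics (p ≥ 1), where diam(X₂⁽ⁱ⁾) → ∞ and diam(X₁⁽ⁱ⁾) is uniformly bounded. If the rescaled spaces X₂⁽ⁱ⁾/diam(X₂⁽ⁱ⁾) converge in the Gromov-Hausdorff sense to a compact metric space Z, then the rescaled products X⁽ⁱ⁾/diam(X⁽ⁱ⁾) also converge in the Gromov-Hausdorff sense to Z. -/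
open Filter Metric GromovHausdorff Topology

private lemma rpow_sum_le_add (a b : ℝ) (ha : 0 ≤ a) (hb : 0 ≤ b) {p : ℝ} (hp : 1 ≤ p) :
    (a ^ p + b ^ p) ^ (1 / p) ≤ a + b := by
  have h := NNReal.rpow_add_rpow_le_add ⟨a, ha⟩ ⟨b, hb⟩ hp
  have h2 := NNReal.coe_le_coe.2 h
  push_cast [NNReal.coe_rpow] at h2
  exact h2

private lemma abs_div_sub_div_le (D b c dY d2 : ℝ) (hd2 : 0 < d2) (hdY : d2 ≤ dY)
    (hdYc : dY ≤ d2 + c) (hb0 : 0 ≤ b) (hbd : b ≤ d2) (hbD : b ≤ D) (hDb : D ≤ b + c)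
    (hc0 : 0 ≤ c) : |D / dY - b / d2| ≤ c / d2 := by
  have hdY0 : 0 < dY := lt_of_lt_of_le hd2 hdY
  rw [div_sub_div _ _ hdY0.ne' hd2.ne', abs_div, abs_of_pos (mul_pos hdY0 hd2),
    div_le_div_iff₀ (mul_pos hdY0 hd2) hd2]
  have : |D * d2 - dY * b| ≤ c * dY := by
    rw [abs_le]
    constructor <;> nlinarith
  nlinarith [abs_nonneg (D * d2 - dY * b)]

/-- Let `Y i` be (a copy of) the `ℓᵖ`-product `X₁⁽ⁱ⁾ × X₂⁽ⁱ⁾` (`p ≥ 1`), with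
`diam X₂⁽ⁱ⁾ → ∞` and `diam X₁⁽ⁱ⁾` uniformly bounded.  Let `W i` be the
rescaling `X₂⁽ⁱ⁾ / diam X₂⁽ⁱ⁾` and `Z i` the rescaling `Y i / diam (Y i)`.
If `W i` converges in the Gromov-Hausdorff sense to a compact metric space
`L`, then the rescaled products `Z i` also converge to `L`. -/
theorem lp_product_rescaled_ghTendsto (p : ℝ) (hp : 1 ≤ p)
    (X1 X2 : ℕ → Type) [∀ i, MetricSpace (X1 i)] [∀ i, MetricSpace (X2 i)]
    [∀ i, CompactSpace (X1 i)] [∀ i, CompactSpace (X2 i)]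
    [∀ i, Nonempty (X1 i)] [∀ i, Nonempty (X2 i)]
    (c : ℝ) (hc : ∀ i, Metric.diam (Set.univ : Set (X1 i)) ≤ c)
    (hdiv : Tendsto (fun i => Metric.diam (Set.univ : Set (X2 i))) atTop atTop)
    -- the `ℓᵖ`-products
    (Y : ℕ → Type) [∀ i, MetricSpace (Y i)]
    [∀ i, CompactSpace (Y i)] [∀ i, Nonempty (Y i)]
    (e : ∀ i, Y i ≃ (X1 i) × (X2 i))
    (hdistY : ∀ i, ∀ z w : Y i, dist z w =
      (dist (e i z).1 (e i w).1 ^ p + dist (e i z).2 (e i w).2 ^ p) ^ (1 / p))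
    -- the rescalings `X₂⁽ⁱ⁾ / diam X₂⁽ⁱ⁾`
    (W : ℕ → Type) [∀ i, MetricSpace (W i)]
    [∀ i, CompactSpace (W i)] [∀ i, Nonempty (W i)]
    (eW : ∀ i, W i ≃ X2 i)
    (hdistW : ∀ i, ∀ z w : W i, dist z w =
      dist (eW i z) (eW i w) / Metric.diam (Set.univ : Set (X2 i)))
    -- the rescalings `Y i / diam (Y i)`
    (Z : ℕ → Type) [∀ i, MetricSpace (Z i)]
    [∀ i, CompactSpace (Z i)] [∀ i, Nonempty (Z i)]
    (eZ : ∀ i, Z i ≃ Y i)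
    (hdistZ : ∀ i, ∀ z w : Z i, dist z w =
      dist (eZ i z) (eZ i w) / Metric.diam (Set.univ : Set (Y i)))
    -- the Gromov-Hausdorff limit
    (L : Type) [MetricSpace L] [CompactSpace L] [Nonempty L]
    (hlim : Tendsto (fun i => ghDist (W i) L) atTop (𝓝 0)) :
    Tendsto (fun i => ghDist (Z i) L) atTop (𝓝 0) := by
  have hp0 : (0:ℝ) < p := lt_of_lt_of_le one_pos hp
  have hc0 : 0 ≤ c := le_trans Metric.diam_nonneg (hc 0)
  -- notation
  set d2 : ℕ → ℝ := fun i => Metric.diam (Set.univ : Set (X2 i)) with hd2def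
  set dY : ℕ → ℝ := fun i => Metric.diam (Set.univ : Set (Y i)) with hdYdef
  -- key facts about distances in `Y i`
  have hsecond : ∀ i, ∀ z w : Y i, dist (e i z).2 (e i w).2 ≤ dist z w := by
    intro i z w
    rw [hdistY i z w]
    calc dist (e i z).2 (e i w).2
        = (dist (e i z).2 (e i w).2 ^ p) ^ (1 / p) := by
          rw [← Real.rpow_mul dist_nonneg, mul_one_div_cancel hp0.ne', Real.rpow_one]
      _ ≤ _ := by
          apply Real.rpow_le_rpow (by positivity) _ (by positivity)
          nlinarith [Real.rpow_nonneg (dist_nonneg : (0:ℝ) ≤ dist (e i z).1 (e i w).1) p]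
  have hYle : ∀ i, ∀ z w : Y i, dist z w ≤ dist (e i z).2 (e i w).2 + c := by
    intro i z w
    rw [hdistY i z w]
    calc (dist (e i z).1 (e i w).1 ^ p + dist (e i z).2 (e i w).2 ^ p) ^ (1 / p)
        ≤ dist (e i z).1 (e i w).1 + dist (e i z).2 (e i w).2 :=
          rpow_sum_le_add _ _ dist_nonneg dist_nonneg hp
      _ ≤ dist (e i z).2 (e i w).2 + c := by
          have : dist (e i z).1 (e i w).1 ≤ c :=
            le_trans (Metric.dist_le_diam_of_mem isCompact_univ.isBounded
              (Set.mem_univ _) (Set.mem_univ _)) (hc i)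
          linarith
  have hdY_ge : ∀ i, d2 i ≤ dY i := by
    intro i
    apply Metric.diam_le_of_forall_dist_le Metric.diam_nonneg
    intro x2 _ y2 _
    set x1 : X1 i := Classical.arbitrary _
    have h1 := hsecond i ((e i).symm (x1, x2)) ((e i).symm (x1, y2))
    simp only [Equiv.apply_symm_apply] at h1
    calc dist x2 y2 ≤ dist ((e i).symm (x1, x2)) ((e i).symm (x1, y2)) := h1
      _ ≤ dY i := Metric.dist_le_diam_of_mem isCompact_univ.isBounded
            (Set.mem_univ _) (Set.mem_univ _)
  have hdY_le : ∀ i, dY i ≤ d2 i + c := by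
    intro i
    apply Metric.diam_le_of_forall_dist_le (by positivity)
    intro z _ w _
    have h1 := hYle i z w
    have h2 : dist (e i z).2 (e i w).2 ≤ d2 i :=
      Metric.dist_le_diam_of_mem isCompact_univ.isBounded (Set.mem_univ _) (Set.mem_univ _)
    linarith
  -- the main GH distance estimate, for `i` with `1 ≤ d2 i`
  have key : ∀ i, 1 ≤ d2 i → ghDist (Z i) (W i) ≤ c / d2 i := by
    intro i hi
    have hd2pos : 0 < d2 i := lt_of_lt_of_le one_pos hi
    have main : ghDist (Z i) (W i) ≤ 0 + (c / d2 i) / 2 + 0 := by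
      refine ghDist_le_of_approx_subsets
        (s := (Set.univ : Set (Z i)))
        (fun z => (eW i).symm (e i (eZ i z.1)).2) ?_ ?_ ?_
      · intro x
        exact ⟨x, Set.mem_univ x, by simp⟩
      · intro w
        refine ⟨⟨(eZ i).symm ((e i).symm (Classical.arbitrary _, eW i w)), Set.mem_univ _⟩, ?_⟩
        simp
      · rintro ⟨z, -⟩ ⟨z', -⟩
        have hdsub : dist (⟨z, Set.mem_univ z⟩ : (Set.univ : Set (Z i)))
            ⟨z', Set.mem_univ z'⟩ = dist z z' := rfl
        rw [hdsub, hdistZ i z z', hdistW i]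
        simp only [Equiv.apply_symm_apply]
        exact abs_div_sub_div_le _ _ _ _ _ hd2pos (hdY_ge i) (hdY_le i) dist_nonneg
          (Metric.dist_le_diam_of_mem isCompact_univ.isBounded (Set.mem_univ _) (Set.mem_univ _))
          (hsecond i _ _) (hYle i _ _) hc0
    have : (c / d2 i) / 2 ≤ c / d2 i := by
      have : 0 ≤ c / d2 i := by positivity
      linarith
    linarith
  -- conclude by squeezing
  have hub : ∀ᶠ i in atTop, ghDist (Z i) L ≤ ghDist (W i) L + c / d2 i := by
    filter_upwards [hdiv.eventually_ge_atTop 1] with i hi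
    have htri : ghDist (Z i) L ≤ ghDist (Z i) (W i) + ghDist (W i) L := by
      simpa [ghDist] using dist_triangle (toGHSpace (Z i)) (toGHSpace (W i)) (toGHSpace L)
    have := key i hi
    linarith
  have hg : Tendsto (fun i => ghDist (W i) L + c / d2 i) atTop (𝓝 0) := by
    have h1 : Tendsto (fun i => c / d2 i) atTop (𝓝 0) := by
      simpa [div_eq_mul_inv] using (hdiv.inv_tendsto_atTop).const_mul c
    simpa using hlim.add h1
  have hlb : ∀ᶠ i in atTop, 0 ≤ ghDist (Z i) L := by
    filter_upwards with i
    exact dist_nonneg (x := toGHSpace (Z i)) (y := toGHSpace L)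
  exact squeeze_zero' hlb hub hg
end
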